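/- Let X and Y be measurable spaces. The graph map Γ : Y^X → (X ⊗ Y)^X, which sends a measurable function f : X → Y to its graph Γ_f : X → X × Y, x ↦ (x, f(x)) (a measurable map into X × Y with the tensor σ-algebra), is measurable when both function spaces carry their evaluation σ-algebras. -/

import Mathlib

/-- The tensor σ-algebra on `X × Y`: the largest σ-algebra making every constant
graph map `y ↦ (x, y)` (for `x ∈ X`) and `x ↦ (x, y)` (for `y ∈ Y`) measurable. -/
def tensorSigma {X Y : Type*} (mX : MeasurableSpace X) (mY : MeasurableSpace Y) :
    MeasurableSpace (X × Y) :=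
  (⨅ x : X, MeasurableSpace.map (fun y => (x, y)) mY) ⊓
    (⨅ y : Y, MeasurableSpace.map (fun x => (x, y)) mX)

/-- `Y^X`: the set of measurable functions from `X` to `Y`. -/
def MeasFn (X Y : Type*) [MeasurableSpace X] [MeasurableSpace Y] :=
  {f : X → Y // Measurable f}

/-- The evaluation σ-algebra on `Y^X`: the smallest σ-algebra making every
point-evaluation map `f ↦ f x` measurable. -/
def evalSigma (X Y : Type*) [MeasurableSpace X] [mY : MeasurableSpace Y] :
    MeasurableSpace (MeasFn X Y) :=
  ⨆ x : X, MeasurableSpace.comap (fun f : MeasFn X Y => f.1 x) mY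

/-- `(X ⊗ Y)^X`: the set of functions `X → X × Y` that are measurable into the
tensor σ-algebra on `X × Y`. -/
def GraphFn (X Y : Type*) [mX : MeasurableSpace X] [mY : MeasurableSpace Y] :=
  {g : X → X × Y // @Measurable X (X × Y) mX (tensorSigma mX mY) g}

/-- The evaluation σ-algebra on `(X ⊗ Y)^X`. -/
def evalSigmaGraph (X Y : Type*) [mX : MeasurableSpace X] [mY : MeasurableSpace Y] :
    MeasurableSpace (GraphFn X Y) :=
  ⨆ x : X, MeasurableSpace.comap (fun g : GraphFn X Y => g.1 x) (tensorSigma mX mY)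

section EvaluationSigmaAlgebras

variable {X Y : Type*} [mX : MeasurableSpace X] [mY : MeasurableSpace Y]

theorem measurable_prodMk_left_tensorSigma (x : X) :
    @Measurable Y (X × Y) mY (tensorSigma mX mY) fun y => (x, y) :=
  measurable_iff_le_map.mpr (inf_le_left.trans (iInf_le _ x))

theorem measurable_eval_evalSigma (x : X) :
    @Measurable (MeasFn X Y) Y (evalSigma X Y) mY fun f => f.1 x :=
  measurable_iff_comap_le.mpr
    (le_iSup (fun x : X => MeasurableSpace.comap (fun f : MeasFn X Y => f.1 x) mY) x)

theorem measurable_evalSigmaGraph_of_measurable_eval {Z : Type*} [MeasurableSpace Z] {G : Z → GraphFn X Y}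
    (hG : ∀ x : X, @Measurable Z (X × Y) _ (tensorSigma mX mY) fun z => (G z).1 x) :
    @Measurable Z (GraphFn X Y) _ (evalSigmaGraph X Y) G := by
  rw [measurable_iff_comap_le, evalSigmaGraph, MeasurableSpace.comap_iSup]
  refine iSup_le fun x => ?_
  rw [MeasurableSpace.comap_comp]
  exact measurable_iff_comap_le.mp (hG x)

end EvaluationSigmaAlgebras

/-- The graph map `Γ : Y^X → (X ⊗ Y)^X`, sending a measurable `f : X → Y` to its
graph `x ↦ (x, f x)`, is measurable when both function spaces carry their
evaluation σ-algebras. -/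
theorem graph_map_measurable
    {X Y : Type*} [mX : MeasurableSpace X] [mY : MeasurableSpace Y]
    (G : MeasFn X Y → GraphFn X Y)
    (hG : ∀ (f : MeasFn X Y) (x : X), (G f).1 x = (x, f.1 x)) :
    @Measurable (MeasFn X Y) (GraphFn X Y) (evalSigma X Y) (evalSigmaGraph X Y) G := by
  refine @measurable_evalSigmaGraph_of_measurable_eval _ _ _ _ _ (evalSigma X Y) _ fun x => ?_
  have hGx : (fun f : MeasFn X Y => (G f).1 x) = (fun y => (x, y)) ∘ fun f => f.1 x :=
    funext fun f => hG f x
  rw [hGx]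
  exact (measurable_prodMk_left_tensorSigma x).comp (measurable_eval_evalSigma x)
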